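/- Let i be a vertex of degree one in a finite connected weighted graph, connected only to vertex l by an edge of weight w. If h satisfies the hitting-time recursion, then the commute time c(i,l) = h(i,l) + h(l,i) equals V_G / w, where V_G is the graph volume (including the edge to i counted on both endpoints). Equivalently, with V_G' the volume of the graph without vertex i, c(i,l) = (V_G' + 2w)/w. -/
import Mathlib


open Finset

/-- If vertex i has exactly one neighbor l with edge weight wgt, then
c(i,l) = h(i,l) + h(l,i) = V_G / wgt, where V_G is the total graph volume
(including the edge to i on both endpoints). -/
theorem commute_time_degree_one_vertex
    (V : Type*) [Fintype V] [DecidableEq V]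
    (w : V → V → ℝ)
    (hsym : ∀ a b, w a b = w b a)
    (hnn : ∀ a b, 0 ≤ w a b)
    (hloop : ∀ a, w a a = 0)
    (hdeg : ∀ a, 0 < ∑ b, w a b)
    (hconn : ∀ a b : V, Relation.ReflTransGen (fun x y => 0 < w x y) a b)
    (i l : V) (hil : i ≠ l)
    (wgt : ℝ) (hw : w i l = wgt) (hwpos : 0 < wgt)
    (honly : ∀ v, v ≠ l → w i v = 0)
    (h : V → V → ℝ)
    (hdiag : ∀ j, h j j = 0)
    (hrec : ∀ a b, a ≠ b → h a b = 1 + ∑ c, (w a c / ∑ x, w a x) * h c b) :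
    h i l + h l i = (∑ a, ∑ b, w a b) / wgt := by
  -- degree of i is wgt
  have hdi : (∑ b, w i b) = wgt := by
    rw [← hw]
    exact Finset.sum_eq_single l (fun b _ hb => honly b hb)
      (fun hl => absurd (Finset.mem_univ l) hl)
  -- h i l = 1
  have hil1 : h i l = 1 := by
    rw [hrec i l hil, Finset.sum_eq_zero, add_zero]
    intro c _
    by_cases hc : c = l
    · rw [hc, hdiag, mul_zero]
    · rw [honly c hc, zero_div, zero_mul]
  set S : ℝ := ∑ a, (∑ b, w a b) * h a i with hS
  have hterm : ∀ a ∈ Finset.univ.erase i,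
      (∑ b, w a b) * h a i = (∑ b, w a b) + ∑ c, w a c * h c i := by
    intro a ha
    have hai : a ≠ i := Finset.ne_of_mem_erase ha
    have hda : (∑ b, w a b) ≠ 0 := ne_of_gt (hdeg a)
    rw [hrec a i hai, mul_add, mul_one, Finset.mul_sum]
    congr 1
    refine Finset.sum_congr rfl fun c _ => ?_
    field_simp
  have hS1 : S = ∑ a ∈ Finset.univ.erase i, (∑ b, w a b) * h a i := by
    rw [hS, ← Finset.sum_erase Finset.univ (by rw [hdiag i, mul_zero])]
  have hcol : ∀ c, ∑ a ∈ Finset.univ.erase i, w a c = (∑ b, w c b) - w i c := by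
    intro c
    rw [Finset.sum_erase_eq_sub (Finset.mem_univ i)]
    congr 1
    exact Finset.sum_congr rfl fun a _ => hsym a c
  have hTi : (∑ c, w i c * h c i) = wgt * h l i := by
    rw [Finset.sum_eq_single l (fun b _ hb => by rw [honly b hb, zero_mul])
      (fun hl => absurd (Finset.mem_univ l) hl), hw]
  have hS2 : S = ((∑ a, ∑ b, w a b) - wgt) + (S - wgt * h l i) := by
    have hA : ∑ a ∈ Finset.univ.erase i, (∑ b, w a b)
        = (∑ a, ∑ b, w a b) - wgt := by
      rw [Finset.sum_erase_eq_sub (Finset.mem_univ i), hdi]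
    have hB : ∑ a ∈ Finset.univ.erase i, (∑ c, w a c * h c i)
        = S - wgt * h l i := by
      rw [Finset.sum_comm]
      have hc : ∀ c ∈ Finset.univ,
          (∑ a ∈ Finset.univ.erase i, w a c * h c i)
            = (∑ b, w c b) * h c i - w i c * h c i := by
        intro c _
        rw [← Finset.sum_mul, hcol, sub_mul]
      rw [Finset.sum_congr rfl hc, Finset.sum_sub_distrib, hTi, hS]
    conv_lhs => rw [hS1, Finset.sum_congr rfl hterm, Finset.sum_add_distrib, hA, hB]
  have h1 : wgt * h l i = (∑ a, ∑ b, w a b) - wgt := by linarith [hS2]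
  rw [hil1]
  rw [eq_div_iff (ne_of_gt hwpos)]
  nlinarith [h1]
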